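/- Let T be an n-dimensional stem nilpotent Lie algebra of class 3 with dim T² = 2. Then Z(T) = T³ is one-dimensional and T/Z(T) ≅ H(1) ⊕ A(n−4). -/

import Mathlib

open LieAlgebra Matrix Module


open LieAlgebra

section ProdLie
variable {L M : Type*}

instance prodLieRing [LieRing L] [LieRing M] : LieRing (L × M) where
  bracket x y := (⁅x.1, y.1⁆, ⁅x.2, y.2⁆)
  add_lie x y z := by ext <;> simp [add_lie]
  lie_add x y z := by ext <;> simp [lie_add]
  lie_self x := by ext <;> simp
  leibniz_lie x y z := by ext <;> simp

@[simp] theorem prod_bracket_fst [LieRing L] [LieRing M] (x y : L × M) :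
    ⁅x, y⁆.1 = ⁅x.1, y.1⁆ := rfl
@[simp] theorem prod_bracket_snd [LieRing L] [LieRing M] (x y : L × M) :
    ⁅x, y⁆.2 = ⁅x.2, y.2⁆ := rfl

instance prodLieAlgebra (F : Type*) [CommRing F] [LieRing L] [LieRing M]
    [LieAlgebra F L] [LieAlgebra F M] : LieAlgebra F (L × M) where
  lie_smul t x y := by ext <;> simp
end ProdLie

section AbL
variable (F : Type*) [Field F]

/-- The abelian Lie algebra of dimension `k` over `F`. -/
def AbLie (k : ℕ) : Type _ := Fin k → F

instance (k : ℕ) : AddCommGroup (AbLie F k) := Pi.addCommGroup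
instance (k : ℕ) : Module F (AbLie F k) := Pi.module _ _ _

instance (k : ℕ) : LieRing (AbLie F k) where
  bracket _ _ := 0
  add_lie _ _ _ := (zero_add 0).symm
  lie_add _ _ _ := (zero_add 0).symm
  lie_self _ := rfl
  leibniz_lie _ _ _ := (zero_add 0).symm

instance (k : ℕ) : LieAlgebra F (AbLie F k) where
  lie_smul t x y := (smul_zero t).symm

instance (k : ℕ) : FiniteDimensional F (AbLie F k) :=
  (inferInstance : FiniteDimensional F (Fin k → F))

instance (k : ℕ) : IsLieAbelian (AbLie F k) := ⟨fun _ _ => rfl⟩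
end AbL
open Matrix
section Heis
variable (F : Type*) [Field F]

/-- The Heisenberg Lie algebra `H(m)` of dimension `2m+1`. -/
def Heis (m : ℕ) : Type _ := (Fin m → F) × (Fin m → F) × F

instance (m : ℕ) : AddCommGroup (Heis F m) := Prod.instAddCommGroup
instance (m : ℕ) : Module F (Heis F m) := Prod.instModule

instance (m : ℕ) : LieRing (Heis F m) where
  bracket x y := (0, 0, x.1 ⬝ᵥ y.2.1 - y.1 ⬝ᵥ x.2.1)
  add_lie x y z := by
    refine Prod.ext ?_ (Prod.ext ?_ ?_)
    · show (0 : Fin m → F) = 0 + 0; rw [add_zero]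
    · show (0 : Fin m → F) = 0 + 0; rw [add_zero]
    · show (x.1 + y.1) ⬝ᵥ z.2.1 - z.1 ⬝ᵥ (x.2.1 + y.2.1) =
        (x.1 ⬝ᵥ z.2.1 - z.1 ⬝ᵥ x.2.1) + (y.1 ⬝ᵥ z.2.1 - z.1 ⬝ᵥ y.2.1)
      rw [add_dotProduct, dotProduct_add]; ring
  lie_add x y z := by
    refine Prod.ext ?_ (Prod.ext ?_ ?_)
    · show (0 : Fin m → F) = 0 + 0; rw [add_zero]
    · show (0 : Fin m → F) = 0 + 0; rw [add_zero]
    · show x.1 ⬝ᵥ (y.2.1 + z.2.1) - (y.1 + z.1) ⬝ᵥ x.2.1 =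
        (x.1 ⬝ᵥ y.2.1 - y.1 ⬝ᵥ x.2.1) + (x.1 ⬝ᵥ z.2.1 - z.1 ⬝ᵥ x.2.1)
      rw [add_dotProduct, dotProduct_add]; ring
  lie_self x := by
    refine Prod.ext rfl (Prod.ext rfl ?_)
    show x.1 ⬝ᵥ x.2.1 - x.1 ⬝ᵥ x.2.1 = 0
    ring
  leibniz_lie x y z := by
    refine Prod.ext ?_ (Prod.ext ?_ ?_)
    · show (0 : Fin m → F) = 0 + 0; rw [add_zero]
    · show (0 : Fin m → F) = 0 + 0; rw [add_zero]
    · show x.1 ⬝ᵥ (0 : Fin m → F) - (0 : Fin m → F) ⬝ᵥ x.2.1 =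
        ((0 : Fin m → F) ⬝ᵥ z.2.1 - z.1 ⬝ᵥ (0 : Fin m → F)) +
          (y.1 ⬝ᵥ (0 : Fin m → F) - (0 : Fin m → F) ⬝ᵥ y.2.1)
      simp

instance (m : ℕ) : LieAlgebra F (Heis F m) where
  lie_smul t x y := by
    refine Prod.ext ?_ (Prod.ext ?_ ?_)
    · show (0 : Fin m → F) = t • 0; rw [smul_zero]
    · show (0 : Fin m → F) = t • 0; rw [smul_zero]
    · show x.1 ⬝ᵥ (t • y.2.1) - (t • y.1) ⬝ᵥ x.2.1 = t • (x.1 ⬝ᵥ y.2.1 - y.1 ⬝ᵥ x.2.1)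
      rw [dotProduct_smul, smul_dotProduct, smul_sub]

instance (m : ℕ) : FiniteDimensional F (Heis F m) :=
  (inferInstance : FiniteDimensional F ((Fin m → F) × (Fin m → F) × F))
end Heis
open LieAlgebra

universe u v

section Functors
variable (F : Type u) [Field F] (L : Type v) [LieRing L] [LieAlgebra F L]

/-- The canonical free presentation `FreeLieAlgebra F L → L`. -/
noncomputable def presHom : FreeLieAlgebra F L →ₗ⁅F⁆ L := FreeLieAlgebra.lift F id

/-- The relation ideal `R` of the canonical free presentation. -/
noncomputable def presKer : LieIdeal F (FreeLieAlgebra F L) := (presHom F L).ker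

/-- The Schur multiplier `M(L) = (R ∩ F²)/[R,F]` of a Lie algebra. -/
noncomputable abbrev Multiplier : Type (max u v) :=
  ↥((presKer F L ⊓ derivedSeries F (FreeLieAlgebra F L) 1).toSubmodule) ⧸
    (Submodule.comap
      ((presKer F L ⊓ derivedSeries F (FreeLieAlgebra F L) 1).toSubmodule).subtype
      (⁅presKer F L, (⊤ : LieIdeal F (FreeLieAlgebra F L))⁆ : LieIdeal F (FreeLieAlgebra F L)).toSubmodule)


/-- Relations defining the nonabelian tensor square. -/
def tensorRel : Set (FreeLieAlgebra F (L × L)) :=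
  letI e : L × L → FreeLieAlgebra F (L × L) := FreeLieAlgebra.of F
  { x | (∃ (c : F) (a b : L), x = e (c • a, b) - c • e (a, b)) ∨
        (∃ (c : F) (a b : L), x = e (a, c • b) - c • e (a, b)) ∨
        (∃ a a' b : L, x = e (a + a', b) - e (a, b) - e (a', b)) ∨
        (∃ a b b' : L, x = e (a, b + b') - e (a, b) - e (a, b')) ∨
        (∃ a a' b : L, x = e (⁅a, a'⁆, b) - e (a, ⁅a', b⁆) + e (a', ⁅a, b⁆)) ∨
        (∃ a b b' : L, x = e (a, ⁅b, b'⁆) - e (⁅b', a⁆, b) + e (⁅b, a⁆, b')) ∨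
        (∃ a b a' b' : L, x = ⁅e (a, b), e (a', b')⁆ + e (⁅b, a⁆, ⁅a', b'⁆)) }

/-- The nonabelian tensor square `L ⊗ L`. -/
abbrev NTensor : Type (max u v) :=
  FreeLieAlgebra F (L × L) ⧸ LieSubmodule.lieSpan F (FreeLieAlgebra F (L × L)) (tensorRel F L)


/-- The generator `a ⊗ b` of the nonabelian tensor square. -/
noncomputable def tmk (a b : L) : NTensor F L :=
  LieSubmodule.Quotient.mk (N := LieSubmodule.lieSpan F (FreeLieAlgebra F (L × L)) (tensorRel F L))
    (FreeLieAlgebra.of F (a, b))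

/-- The square `L □ L`, i.e. the subalgebra of `L ⊗ L` generated by the elements `a ⊗ a`. -/
noncomputable def SqSub : LieSubalgebra F (NTensor F L) :=
  LieSubalgebra.lieSpan F _ { x | ∃ a : L, x = tmk F L a a }

/-- The ideal of `L ⊗ L` generated by the elements `a ⊗ a`. -/
noncomputable def sqIdeal : LieIdeal F (NTensor F L) :=
  LieSubmodule.lieSpan F _ { x | ∃ a : L, x = tmk F L a a }

/-- The exterior square `L ∧ L`. -/
noncomputable abbrev ExtSq : Type (max u v) := NTensor F L ⧸ sqIdeal F L


/-- The generator `a ∧ b` of the exterior square. -/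
noncomputable def wmk (a b : L) : ExtSq F L :=
  LieSubmodule.Quotient.mk (N := sqIdeal F L) (tmk F L a b)

/-- The exterior center `Z^∧(L)`. -/
noncomputable def extCenter : Set L := { x : L | ∀ l : L, wmk F L x l = 0 }

/-- A Lie algebra is capable if it is isomorphic to `H/Z(H)` for some Lie algebra `H`. -/
def Capable : Prop :=
  ∃ (H : Type (max u v)) (_ : LieRing H) (_ : LieAlgebra F H),
    Nonempty ((H ⧸ LieAlgebra.center F H) ≃ₗ⁅F⁆ L)

/-- The corank `t(L)` of an `n`-dimensional nilpotent Lie algebra. -/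
noncomputable def corank : ℕ :=
  Module.finrank F L * (Module.finrank F L - 1) / 2 - Module.finrank F (Multiplier F L)

/-- The abelianization of `L` (as an `F`-module). -/
noncomputable abbrev AbQuot : Type v := L ⧸ derivedSeries F L 1

end Functors

/-!
Since `T⁴ = 0`, the ideal `T³` is central, and `T³ ≠ 0` forces `Z(T) ⊊ T²`; as `dim T² = 2` and
`Z(T) ⊆ T²`, this pins `Z(T) = T³` down to a line `F z`. Choose `w ∈ T² \ Z(T)`, so that
`T² = F z ⊕ F w`, `⁅w, x⁆ = γ(x) z` for a functional `γ`, and let `q` be the `w`-coordinate on `T²`.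
For `t ∈ T²` we get `⁅t, x⁆ = q(t) γ(x) z`, and the Jacobi identity with some `u`, `γ u = 1`,
turns this into `q⁅x, y⁆ = γ(x) δ(y) - γ(y) δ(x)` with `δ = q ∘ ad u`. Hence
`x ↦ (γ x, δ x, q x)` is a Lie homomorphism `T → H(1)`; pairing it with the projection onto
`T / (T² + F u + F v)`, where `γ v = 0` and `δ v = 1`, gives a homomorphism
`T → H(1) ⊕ A(n - 4)` whose kernel is `Z(T)`, and the dimensions match.
-/

open LieModule

section LinearAlgebra

variable {F V : Type*} [Field F] [AddCommGroup V] [Module F V]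

theorem exists_apply_eq_one_and_le_ker_of_notMem {p : Submodule F V} {v : V} (hv : v ∉ p) :
    ∃ f : V →ₗ[F] F, f v = 1 ∧ p ≤ LinearMap.ker f := by
  obtain ⟨f, hfv, hpf⟩ := p.exists_le_ker_of_notMem hv
  exact ⟨(f v)⁻¹ • f, inv_mul_cancel₀ hfv, fun x hx => by simp [LinearMap.mem_ker.1 (hpf hx)]⟩

theorem sub_smul_mem_of_mem_sup_span_singleton {p : Submodule F V} {w : V} {f : V →ₗ[F] F}
    (hfp : p ≤ LinearMap.ker f) (hfw : f w = 1) {t : V} (ht : t ∈ p ⊔ F ∙ w) :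
    t - f t • w ∈ p := by
  obtain ⟨c, hc, s, hs, rfl⟩ := Submodule.mem_sup.1 ht
  obtain ⟨a, rfl⟩ := Submodule.mem_span_singleton.1 hs
  simpa [LinearMap.mem_ker.1 (hfp hc), hfw] using hc

theorem mem_of_mem_sup_span_singleton {p : Submodule F V} {w : V} {f : V →ₗ[F] F}
    (hfp : p ≤ LinearMap.ker f) (hfw : f w = 1) {t : V} (ht : t ∈ p ⊔ F ∙ w) (hft : f t = 0) :
    t ∈ p := by
  simpa [hft] using sub_smul_mem_of_mem_sup_span_singleton hfp hfw ht

end LinearAlgebra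

section LowerCentralSeries

variable {R L : Type*} [CommRing R] [LieRing L] [LieAlgebra R L]

theorem lie_mem_derivedSeries_one (x y : L) : ⁅x, y⁆ ∈ derivedSeries R L 1 := by
  rw [derivedSeries_def, derivedSeriesOfIdeal_succ, derivedSeriesOfIdeal_zero]
  exact LieSubmodule.lie_mem_lie (LieSubmodule.mem_top x) (LieSubmodule.mem_top y)

theorem derivedSeries_one_le_of_forall_lie_mem {I : LieIdeal R L} (h : ∀ x y : L, ⁅x, y⁆ ∈ I) :
    derivedSeries R L 1 ≤ I := by
  rw [derivedSeries_def, derivedSeriesOfIdeal_succ, derivedSeriesOfIdeal_zero,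
    LieSubmodule.lie_le_iff]
  exact fun x _ y _ => h x y

theorem lie_mem_lowerCentralSeries_succ (x : L) {y : L} {k : ℕ}
    (hy : y ∈ lowerCentralSeries R L L k) : ⁅x, y⁆ ∈ lowerCentralSeries R L L (k + 1) := by
  rw [lowerCentralSeries_succ]
  exact LieSubmodule.lie_mem_lie (LieSubmodule.mem_top x) hy

theorem lowerCentralSeries_one_eq_derivedSeries_one :
    lowerCentralSeries R L L 1 = derivedSeries R L 1 := by
  rw [lowerCentralSeries_succ, lowerCentralSeries_zero, derivedSeries_def,
    derivedSeriesOfIdeal_succ, derivedSeriesOfIdeal_zero]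

theorem lowerCentralSeries_le_center_of_succ_eq_bot {k : ℕ}
    (h : lowerCentralSeries R L L (k + 1) = ⊥) : lowerCentralSeries R L L k ≤ center R L :=
  fun x hx => (mem_maxTrivSubmodule R L L x).2 fun y => by
    have := lie_mem_lowerCentralSeries_succ y hx
    rwa [h, LieSubmodule.mem_bot] at this

theorem center_lt_derivedSeries_one (hstem : center R L ≤ derivedSeries R L 1)
    (h2 : lowerCentralSeries R L L 2 ≠ ⊥) : center R L < derivedSeries R L 1 := by
  refine lt_of_le_of_ne hstem fun h => h2 ?_
  rw [lowerCentralSeries_succ, lowerCentralSeries_one_eq_derivedSeries_one, ← h,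
    LieSubmodule.lie_eq_bot_iff]
  exact fun x _ m hm => (mem_maxTrivSubmodule R L L m).1 hm x

end LowerCentralSeries

section HeisenbergAndAbelian

variable {F L : Type*} [Field F] [LieRing L] [LieAlgebra F L]

theorem finrank_heis_one : finrank F (Heis F 1) = 3 := by
  show finrank F ((Fin 1 → F) × (Fin 1 → F) × F) = 3
  simp [Module.finrank_prod]

theorem finrank_abLie (k : ℕ) : finrank F (AbLie F k) = k := Module.finrank_fin_fun F

def heisOneLieHom (γ δ q : L →ₗ[F] F) (hγ : ∀ x y : L, γ ⁅x, y⁆ = 0)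
    (hδ : ∀ x y : L, δ ⁅x, y⁆ = 0) (hq : ∀ x y : L, q ⁅x, y⁆ = γ x * δ y - γ y * δ x) :
    L →ₗ⁅F⁆ Heis F 1 where
  toFun x := (fun _ => γ x, fun _ => δ x, q x)
  map_add' x y := by simp only [map_add]; rfl
  map_smul' c x := by simp only [map_smul, smul_eq_mul]; rfl
  map_lie' {x y} := by
    show _ = ((0, 0, _) : Heis F 1)
    simp [hγ, hδ, hq, dotProduct]
    rfl

theorem heisOneLieHom_apply_eq_zero_iff {γ δ q : L →ₗ[F] F} {hγ hδ hq} {x : L} :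
    heisOneLieHom γ δ q hγ hδ hq x = 0 ↔ γ x = 0 ∧ δ x = 0 ∧ q x = 0 := by
  show ((fun _ => γ x, fun _ => δ x, q x) : Heis F 1) = ((0, 0, 0) : Heis F 1) ↔ _
  simp [funext_iff]

end HeisenbergAndAbelian

section Quotient

variable {F L M : Type*} [Field F] [LieRing L] [LieAlgebra F L] [FiniteDimensional F L]
  [LieRing M] [LieAlgebra F M] [FiniteDimensional F M]

theorem nonempty_quotient_lieEquiv_of_ker_eq (f : L →ₗ⁅F⁆ M) {I : LieIdeal F L}
    (hker : f.ker = I) (hdim : finrank F I + finrank F M = finrank F L) :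
    Nonempty ((L ⧸ I) ≃ₗ⁅F⁆ M) := by
  subst hker
  have hrange : f.range = ⊤ := by
    rw [LieHom.range_eq_top, ← LieHom.coe_toLinearMap, ← LinearMap.range_eq_top]
    apply Submodule.eq_top_of_finrank_eq
    have : finrank F (LinearMap.range (f : L →ₗ[F] M)) + finrank F f.ker = finrank F L :=
      LinearMap.finrank_range_add_finrank_ker (f : L →ₗ[F] M)
    omega
  exact ⟨f.quotKerEquivRange.trans
    ((LieEquiv.ofEq _ _ (by rw [hrange])).trans LieSubalgebra.topEquiv)⟩

theorem nonempty_quotient_lieEquiv_prod_abLie (f : L →ₗ⁅F⁆ M) {P : Submodule F L}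
    {I : LieIdeal F L} {k : ℕ} (hP : ∀ x y : L, ⁅x, y⁆ ∈ P)
    (hker : ∀ x, x ∈ I ↔ f x = 0 ∧ x ∈ P) (hPdim : finrank F P = finrank F I + finrank F M)
    (hk : finrank F P + k = finrank F L) : Nonempty ((L ⧸ I) ≃ₗ⁅F⁆ M × AbLie F k) := by
  have hQ : finrank F (L ⧸ P) = finrank F (AbLie F k) := by
    have := P.finrank_quotient_add_finrank
    rw [finrank_abLie]
    omega
  let e := LinearEquiv.ofFinrankEq _ _ hQ
  let ψ : L →ₗ⁅F⁆ AbLie F k :=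
    { e.toLinearMap ∘ₗ P.mkQ with
      map_lie' := fun {x y} => show e (P.mkQ ⁅x, y⁆) = 0 by
        rw [Submodule.mkQ_apply, (Submodule.Quotient.mk_eq_zero P).2 (hP x y), map_zero] }
  have hψ (x : L) : ψ x = 0 ↔ x ∈ P := by
    show e (P.mkQ x) = 0 ↔ x ∈ P
    rw [e.map_eq_zero_iff, Submodule.mkQ_apply, Submodule.Quotient.mk_eq_zero]
  refine nonempty_quotient_lieEquiv_of_ker_eq (f.prod ψ) ?_ ?_
  · ext x
    rw [LieHom.mem_ker, hker, LieHom.prod_apply, Prod.mk_eq_zero, hψ]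
  · rw [Module.finrank_prod, finrank_abLie]
    omega

end Quotient

/- A *frame* of `L` is the data `z w : L`, `γ q : L →ₗ[F] F` with `⁅w, x⁆ = γ x • z` for all `x`
and `t - q t • w` central for all `t ∈ L²`. -/
section Frame

variable {F L : Type*} [Field F] [LieRing L] [LieAlgebra F L] {z w : L} {γ q : L →ₗ[F] F}

theorem lie_eq_smul_of_mem_derivedSeries (hw : ∀ x, ⁅w, x⁆ = γ x • z)
    (hq : ∀ t ∈ derivedSeries F L 1, t - q t • w ∈ center F L) {t : L}
    (ht : t ∈ derivedSeries F L 1) (a : L) : ⁅t, a⁆ = (q t * γ a) • z := by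
  have h : ⁅t - q t • w, a⁆ = 0 := by
    rw [← lie_skew, (mem_maxTrivSubmodule F L L _).1 (hq t ht) a, neg_zero]
  rw [sub_lie, smul_lie, hw, sub_eq_zero] at h
  rw [h, smul_smul]

theorem apply_lie_eq_mul_sub_mul (hz : z ≠ 0) (hw : ∀ x, ⁅w, x⁆ = γ x • z)
    (hq : ∀ t ∈ derivedSeries F L 1, t - q t • w ∈ center F L) {u : L} (hu : γ u = 1)
    (x y : L) : q ⁅x, y⁆ = γ x * q ⁅u, y⁆ - γ y * q ⁅u, x⁆ := by
  have hlie (a b c : L) : ⁅⁅a, b⁆, c⁆ = (q ⁅a, b⁆ * γ c) • z :=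
    lie_eq_smul_of_mem_derivedSeries hw hq (lie_mem_derivedSeries_one a b) c
  have jacobi := leibniz_lie u x y
  rw [← lie_skew u, ← lie_skew x ⁅u, y⁆, hlie, hlie, hlie, hu, ← neg_smul, ← neg_smul,
    ← add_smul] at jacobi
  linear_combination -smul_left_injective F hz jacobi

theorem apply_eq_zero_of_mem_derivedSeries (hz : z ≠ 0) (hw : ∀ x, ⁅w, x⁆ = γ x • z)
    (hq : ∀ t ∈ derivedSeries F L 1, t - q t • w ∈ center F L) {t : L}
    (ht : t ∈ derivedSeries F L 1) : γ t = 0 := by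
  have hγw : γ w = 0 := by simpa [hz] using (hw w).symm
  have := hw t
  rw [← lie_skew, lie_eq_smul_of_mem_derivedSeries hw hq ht, hγw] at this
  simpa [hz] using this.symm

theorem apply_lie_eq_zero_of_mem_derivedSeries (hzq : q z = 0) (hw : ∀ x, ⁅w, x⁆ = γ x • z)
    (hq : ∀ t ∈ derivedSeries F L 1, t - q t • w ∈ center F L) (u : L) {t : L}
    (ht : t ∈ derivedSeries F L 1) : q ⁅u, t⁆ = 0 := by
  rw [← lie_skew, lie_eq_smul_of_mem_derivedSeries hw hq ht]
  simp [hzq]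

theorem exists_apply_eq_one_of_frame (hw : ∀ x, ⁅w, x⁆ = γ x • z)
    (hq : ∀ t ∈ derivedSeries F L 1, t - q t • w ∈ center F L)
    (hDZ : ¬ derivedSeries F L 1 ≤ center F L) : ∃ u, γ u = 1 := by
  refine LinearMap.surjective
    (fun hγ => hDZ (derivedSeries_one_le_of_forall_lie_mem fun x y => ?_)) 1
  have hwZ : w ∈ center F L := (mem_maxTrivSubmodule F L L w).2 fun x => by
    rw [← lie_skew, hw, hγ, LinearMap.zero_apply, zero_smul, neg_zero]
  simpa using add_mem (hq _ (lie_mem_derivedSeries_one x y)) (SMulMemClass.smul_mem (q ⁅x, y⁆) hwZ)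

theorem exists_apply_eq_zero_and_apply_lie_eq_one_of_frame (hz : z ≠ 0)
    (hw : ∀ x, ⁅w, x⁆ = γ x • z) (hq : ∀ t ∈ derivedSeries F L 1, t - q t • w ∈ center F L)
    (hDZ : ¬ derivedSeries F L 1 ≤ center F L) {u : L} (hu : γ u = 1) :
    ∃ v, γ v = 0 ∧ q ⁅u, v⁆ = 1 := by
  obtain ⟨y, hy⟩ : ∃ y, (q ∘ₗ ad F L u) y = 1 := by
    refine LinearMap.surjective
      (fun hδ => hDZ (derivedSeries_one_le_of_forall_lie_mem fun x y => ?_)) 1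
    have hδ' (a : L) : q ⁅u, a⁆ = 0 := by simpa using LinearMap.congr_fun hδ a
    have hxy : q ⁅x, y⁆ = 0 := by rw [apply_lie_eq_mul_sub_mul hz hw hq hu, hδ', hδ']; ring
    simpa [hxy] using hq _ (lie_mem_derivedSeries_one x y)
  refine ⟨y - γ y • u, by simp [hu], ?_⟩
  simpa [lie_sub] using hy

open Submodule in
theorem exists_lieHom_heisOne_of_frame [FiniteDimensional F L] (hz : z ≠ 0)
    (hzZ : z ∈ center F L) (hqZ : (center F L).toSubmodule ≤ LinearMap.ker q)
    (hw : ∀ x, ⁅w, x⁆ = γ x • z) (hq : ∀ t ∈ derivedSeries F L 1, t - q t • w ∈ center F L)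
    (hstem : center F L ≤ derivedSeries F L 1) (hDZ : ¬ derivedSeries F L 1 ≤ center F L) :
    ∃ (f : L →ₗ⁅F⁆ Heis F 1) (P : Submodule F L), (∀ x y : L, ⁅x, y⁆ ∈ P) ∧
      (∀ x, x ∈ center F L ↔ f x = 0 ∧ x ∈ P) ∧
      finrank F P = finrank F (derivedSeries F L 1) + 2 := by
  obtain ⟨u, hu⟩ := exists_apply_eq_one_of_frame hw hq hDZ
  obtain ⟨v, hγv, hδv⟩ := exists_apply_eq_zero_and_apply_lie_eq_one_of_frame hz hw hq hDZ hu
  let D : Submodule F L := derivedSeries F L 1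
  let δ := q ∘ₗ ad F L u
  have hD (x y : L) : ⁅x, y⁆ ∈ D := lie_mem_derivedSeries_one x y
  have hγD : D ≤ LinearMap.ker γ := fun t => apply_eq_zero_of_mem_derivedSeries hz hw hq
  have hδD : D ⊔ F ∙ u ≤ LinearMap.ker δ :=
    sup_le (fun t => apply_lie_eq_zero_of_mem_derivedSeries (hqZ hzZ) hw hq u)
      ((span_singleton_le_iff_mem _ _).2 (by simp [δ]))
  have huD : u ∉ D := fun h => one_ne_zero (hu.symm.trans (hγD h))
  have hvDu : v ∉ D ⊔ F ∙ u := fun h => one_ne_zero (hδv.symm.trans (hδD h))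
  refine ⟨heisOneLieHom γ δ q (fun x y => LinearMap.mem_ker.1 (hγD (hD x y)))
      (fun x y => LinearMap.mem_ker.1 (hδD (mem_sup_left (hD x y))))
      (fun x y => by simpa [δ] using apply_lie_eq_mul_sub_mul hz hw hq hu x y),
    D ⊔ F ∙ u ⊔ F ∙ v, fun x y => mem_sup_left (mem_sup_left (hD x y)),
    fun x => ?_, by rw [finrank_sup_span_singleton hvDu, finrank_sup_span_singleton huD]; rfl⟩
  rw [heisOneLieHom_apply_eq_zero_iff]
  constructor
  · intro hx
    have hxD : x ∈ D := hstem hx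
    exact ⟨⟨hγD hxD, hδD (mem_sup_left hxD), hqZ hx⟩, mem_sup_left (mem_sup_left hxD)⟩
  · rintro ⟨⟨hγx, hδx, hqx⟩, hxP⟩
    have hxD := mem_of_mem_sup_span_singleton hγD hu
      (mem_of_mem_sup_span_singleton hδD hδv hxP hδx) hγx
    simpa [hqx] using hq x hxD

end Frame

section Stem

variable {F T : Type*} [Field F] [LieRing T] [LieAlgebra F T] [FiniteDimensional F T]

theorem center_eq_lowerCentralSeries_two (hstem : center F T ≤ derivedSeries F T 1)
    (h3 : lowerCentralSeries F T T 3 = ⊥) (h2 : lowerCentralSeries F T T 2 ≠ ⊥)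
    (hd : finrank F (derivedSeries F T 1) = 2) :
    center F T = lowerCentralSeries F T T 2 ∧ finrank F (center F T) = 1 := by
  have hle := lowerCentralSeries_le_center_of_succ_eq_bot h3
  have hlt : finrank F (center F T) < 2 :=
    hd ▸ Submodule.finrank_lt_finrank_of_lt (center_lt_derivedSeries_one hstem h2)
  have hpos : 1 ≤ finrank F (lowerCentralSeries F T T 2) :=
    Submodule.one_le_finrank_iff.2 (by simpa using h2)
  have hmono : finrank F (lowerCentralSeries F T T 2) ≤ finrank F (center F T) :=
    Submodule.finrank_mono hle
  exact ⟨(LieSubmodule.toSubmodule_inj _ _).1 (Submodule.eq_of_le_of_finrank_le hle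
    (show finrank F (center F T) ≤ finrank F (lowerCentralSeries F T T 2) by omega)).symm,
    by omega⟩

open Submodule in
theorem exists_frame_of_stem (hstem : center F T ≤ derivedSeries F T 1)
    (h3 : lowerCentralSeries F T T 3 = ⊥) (h2 : lowerCentralSeries F T T 2 ≠ ⊥)
    (hd : finrank F (derivedSeries F T 1) = 2) :
    ∃ (z w : T) (γ q : T →ₗ[F] F), z ≠ 0 ∧ z ∈ center F T ∧
      (center F T).toSubmodule ≤ LinearMap.ker q ∧ (∀ x, ⁅w, x⁆ = γ x • z) ∧
      ∀ t ∈ derivedSeries F T 1, t - q t • w ∈ center F T := by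
  obtain ⟨hZ, hZ1⟩ := center_eq_lowerCentralSeries_two hstem h3 h2 hd
  obtain ⟨z, hzZ, hz⟩ := exists_mem_ne_zero_of_ne_bot
    (one_le_finrank_iff.1 (show 1 ≤ finrank F (center F T).toSubmodule from hZ1.ge))
  have hZz : (center F T).toSubmodule = F ∙ z :=
    eq_span_singleton_of_mem_of_finrank_eq_one hZ1 hzZ hz
  obtain ⟨w, hwD, hwZ⟩ := SetLike.exists_of_lt (center_lt_derivedSeries_one hstem h2)
  obtain ⟨r, hrz⟩ := Projective.exists_dual_eq_one F hz
  obtain ⟨q, hqw, hqZ⟩ := exists_apply_eq_one_and_le_ker_of_notMem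
    (p := (center F T).toSubmodule) hwZ
  have hle : (center F T).toSubmodule ⊔ F ∙ w ≤ (derivedSeries F T 1).toSubmodule :=
    sup_le hstem ((span_singleton_le_iff_mem _ _).2 hwD)
  have hfinrank : finrank F ((center F T).toSubmodule ⊔ F ∙ w : Submodule F T) = 2 := by
    rw [finrank_sup_span_singleton hwZ]
    exact congrArg (· + 1) hZ1
  have hD : (derivedSeries F T 1).toSubmodule = (center F T).toSubmodule ⊔ F ∙ w :=
    (eq_of_le_of_finrank_le hle (by rw [hfinrank]; exact hd.le)).symm
  refine ⟨z, w, r ∘ₗ ad F T w, q, hz, hzZ, hqZ, fun x => ?_,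
    fun t ht => sub_smul_mem_of_mem_sup_span_singleton hqZ hqw (hD ▸ ht)⟩
  have hwx : ⁅w, x⁆ ∈ F ∙ z := by
    rw [← hZz, ← lie_skew]
    refine neg_mem (hZ ▸ lie_mem_lowerCentralSeries_succ x ?_)
    rwa [lowerCentralSeries_one_eq_derivedSeries_one]
  obtain ⟨a, ha⟩ := mem_span_singleton.1 hwx
  simp [← ha, hrz]

end Stem

/-- for a stem Lie algebra of class 3 with `dim T² = 2`,
`Z(T) = T³` is one-dimensional and `T/Z(T) ≅ H(1) ⊕ A(n-4)`. -/
theorem stem_class_three_center (F : Type u) [Field F]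
    (T : Type u) [LieRing T] [LieAlgebra F T] [FiniteDimensional F T]
    (hstem : LieAlgebra.center F T ≤ derivedSeries F T 1)
    (h3 : LieModule.lowerCentralSeries F T T 3 = ⊥) (h2 : LieModule.lowerCentralSeries F T T 2 ≠ ⊥)
    (n : ℕ) (hn : Module.finrank F T = n)
    (hd : Module.finrank F ↥(derivedSeries F T 1) = 2) :
    LieAlgebra.center F T = LieModule.lowerCentralSeries F T T 2 ∧
    Module.finrank F ↥(LieAlgebra.center F T) = 1 ∧
    Nonempty ((T ⧸ LieAlgebra.center F T) ≃ₗ⁅F⁆ (Heis F 1 × AbLie F (n - 4))) := by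
  obtain ⟨hZ, hZ1⟩ := center_eq_lowerCentralSeries_two hstem h3 h2 hd
  refine ⟨hZ, hZ1, ?_⟩
  obtain ⟨z, w, γ, q, hz, hzZ, hqZ, hw, hq⟩ := exists_frame_of_stem hstem h3 h2 hd
  obtain ⟨f, P, hP, hker, hPdim⟩ := exists_lieHom_heisOne_of_frame hz hzZ hqZ hw hq hstem
    (center_lt_derivedSeries_one hstem h2).not_ge
  have hP4 : finrank F P = 4 := by rw [hPdim, hd]
  have hn4 : 4 ≤ n := hn ▸ hP4 ▸ P.finrank_le
  exact nonempty_quotient_lieEquiv_prod_abLie f hP hker (by rw [hP4, hZ1, finrank_heis_one])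
    (by omega)
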